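/- arXiv:math/0406498 — 2 statements merged into one kernel-verified Lean document; each statement's English description precedes it below -/
import Mathlib

section
/- Let S_* be a bounded-below acyclic chain complex of finitely generated free modules over a ring R. Then there exists a trivial chain complex R_* such that S_* ⊕ R_* is a trivial chain complex. -/
open CategoryTheory Limits

variable (R : Type) [Ring R]

/-- Degree-`n` part of the direct sum `⊕ᵢ T_*(i, F i)` of disc complexes
`0 ← F ←(id)– F ← 0` (the complex `T_*(i,F)` being concentrated in degrees `i, i+1`). -/
noncomputable def discX (F : ℕ → ModuleCat.{0} R) : ℕ → ModuleCat.{0} R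
  | 0 => F 0
  | (n + 1) => ModuleCat.of.{0} R (F (n + 1) × F n)

/-- The boundary maps of the direct sum of disc complexes. -/
noncomputable def discD (F : ℕ → ModuleCat.{0} R) : ∀ n, discX R F (n + 1) ⟶ discX R F n
  | 0 => ModuleCat.ofHom (LinearMap.snd R (F 1) (F 0) : (F 1 × F 0) →ₗ[R] F 0)
  | (n + 1) => ModuleCat.ofHom (LinearMap.prod (LinearMap.snd R (F (n + 2)) (F (n + 1))) 0 :
      (F (n + 2) × F (n + 1)) →ₗ[R] (F (n + 1) × F n))

/-- The direct sum `⊕ᵢ T_*(i, F i)` of disc complexes, as a chain complex. -/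
noncomputable def discComplex (F : ℕ → ModuleCat.{0} R) : ChainComplex (ModuleCat.{0} R) ℕ :=
  ChainComplex.of (discX R F) (discD R F) (by
    intro n
    cases n <;> first | rfl | (apply ModuleCat.hom_ext; apply LinearMap.ext; intro x; rfl))

/-- A chain complex is trivial if it is isomorphic to a direct sum of complexes
`T_*(i,F)` of the form `0 ← F ←(id)– F ← 0` with `F` finitely generated free. -/
def IsTrivialComplex (T : ChainComplex (ModuleCat.{0} R) ℕ) : Prop :=
  ∃ F : ℕ → ModuleCat.{0} R, (∀ n, Module.Free R (F n) ∧ Module.Finite R (F n)) ∧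
    Nonempty (T ≅ discComplex R F)

section Aux

variable (S : ChainComplex (ModuleCat.{0} R) ℕ)

lemma dd (n : ℕ) (x : S.X (n+1)) : S.d n (n-1) (S.d (n+1) n x) = 0 := by
  have := S.d_comp_d (n+1) n (n-1)
  calc S.d n (n-1) (S.d (n+1) n x) = (S.d (n+1) n ≫ S.d n (n-1)) x := rfl
  _ = 0 := by rw [this]; rfl

noncomputable def Zc (n : ℕ) : Submodule R (S.X n) := LinearMap.ker (S.d n (n-1)).hom

noncomputable def pic (n : ℕ) : S.X (n+1) →ₗ[R] Zc R S n :=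
  LinearMap.codRestrict (Zc R S n) (S.d (n+1) n).hom (fun x => dd R S n x)

@[simp] lemma pic_coe (n : ℕ) (x : S.X (n+1)) : (pic R S n x : S.X n) = S.d (n+1) n x := rfl

lemma pic_zc (n : ℕ) (z : S.X (n+1)) (hz : z ∈ Zc R S (n+1)) : pic R S n z = 0 :=
  Subtype.ext hz

lemma pic_d (n : ℕ) (x : S.X (n+2)) : pic R S n (S.d (n+2) (n+1) x) = 0 := by
  apply Subtype.ext
  show S.d (n+1) n (S.d (n+2) (n+1) x) = 0
  exact dd R S (n+1) x

lemma pic_surj (hacyclic : ∀ n, S.ExactAt n) (n : ℕ) : Function.Surjective (pic R S n) := by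
  have h := (S.exactAt_iff' (i := n+1) (j := n) (k := n-1) (by simp [ChainComplex.prev]) (by
    cases n
    · exact ChainComplex.next_nat_zero
    · exact ChainComplex.next_nat_succ _)).mp (hacyclic n)
  rw [ShortComplex.moduleCat_exact_iff] at h
  rintro ⟨x, hx⟩
  obtain ⟨y, hy⟩ := h x hx
  exact ⟨y, Subtype.ext hy⟩

lemma zc_zero_top : Zc R S 0 = ⊤ := by
  have : S.d 0 0 = 0 := S.shape 0 0 (by simp)
  ext x
  simp only [Zc, this]
  exact ⟨fun _ => trivial, fun _ => rfl⟩

/-- `S.X 0 ≃ Z 0`. -/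
noncomputable def e0 : S.X 0 ≃ₗ[R] Zc R S 0 :=
  LinearEquiv.ofLinear
    (LinearMap.codRestrict (Zc R S 0) LinearMap.id
      (fun x => by rw [zc_zero_top]; trivial))
    (Zc R S 0).subtype (by ext x; rfl) (by ext x; rfl)

@[simp] lemma e0_coe (x : S.X 0) : (e0 R S x : S.X 0) = x := rfl

lemma proj_fin (hS : ∀ n, Module.Free R (S.X n) ∧ Module.Finite R (S.X n))
    (hacyclic : ∀ n, S.ExactAt n) (n : ℕ) :
    Module.Projective R (Zc R S n) ∧ Module.Finite R (Zc R S n) := by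
  induction n with
  | zero =>
    have := (hS 0).1
    have := (hS 0).2
    exact ⟨Module.Projective.of_equiv (e0 R S), Module.Finite.equiv (e0 R S)⟩
  | succ n ih =>
    have := ih.1
    obtain ⟨σ, hσ⟩ := Module.projective_lifting_property (pic R S n) LinearMap.id
      (pic_surj R S hacyclic n)
    have hmem : ∀ x : S.X (n+1), x - σ (pic R S n x) ∈ Zc R S (n+1) := by
      intro x
      have h2 : pic R S n (σ (pic R S n x)) = pic R S n x := LinearMap.congr_fun hσ _
      have h1 : S.d (n+1) n (σ (pic R S n x)) = S.d (n+1) n x := congrArg Subtype.val h2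
      show S.d (n+1) n (x - σ (pic R S n x)) = 0
      rw [map_sub, h1, sub_self]
    set r : S.X (n+1) →ₗ[R] Zc R S (n+1) :=
      LinearMap.codRestrict _
        ((LinearMap.id : S.X (n+1) →ₗ[R] S.X (n+1)) - σ.comp (pic R S n)) hmem with hr
    have hret : r.comp (Zc R S (n+1)).subtype = LinearMap.id := by
      ext z
      have : pic R S n (z : S.X (n+1)) = 0 := pic_zc R S n z z.2
      simp [hr, LinearMap.codRestrict, this]
    have := (hS (n+1)).1
    have := (hS (n+1)).2
    refine ⟨Module.Projective.of_split (Zc R S (n+1)).subtype r hret, ?_⟩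
    exact Module.Finite.of_surjective r (fun z => ⟨z, LinearMap.congr_fun hret z⟩)

variable (σ : ∀ n, Zc R S n →ₗ[R] S.X (n+1))
variable (hσ : ∀ n, (pic R S n).comp (σ n) = LinearMap.id)

/-- The splitting `S.X (n+1) ≃ Z (n+1) × Z n`. -/
noncomputable def ec (n : ℕ) : S.X (n+1) ≃ₗ[R] (Zc R S (n+1)) × (Zc R S n) := by
  refine LinearEquiv.ofLinear
    (LinearMap.prod
      (LinearMap.codRestrict (Zc R S (n+1))
        ((LinearMap.id : S.X (n+1) →ₗ[R] S.X (n+1)) - (σ n).comp (pic R S n)) ?_)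
      (pic R S n))
    ((Zc R S (n+1)).subtype.comp (LinearMap.fst R _ _) + (σ n).comp (LinearMap.snd R _ _))
    ?_ ?_
  · intro x
    have h2 : pic R S n (σ n (pic R S n x)) = pic R S n x := LinearMap.congr_fun (hσ n) _
    have h1 : S.d (n+1) n (σ n (pic R S n x)) = S.d (n+1) n x := congrArg Subtype.val h2
    show S.d (n+1) n (x - σ n (pic R S n x)) = 0
    rw [map_sub, h1, sub_self]
  · apply LinearMap.ext
    rintro ⟨z, w⟩
    have hz : pic R S n (z : S.X (n+1)) = 0 := pic_zc R S n _ z.2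
    have hw : pic R S n (σ n w) = w := LinearMap.congr_fun (hσ n) _
    refine Prod.ext ?_ ?_
    · apply Subtype.ext
      show ((z : S.X (n+1)) + σ n w) - σ n (pic R S n ((z : S.X (n+1)) + σ n w))
          = (z : S.X (n+1))
      rw [map_add, hz, zero_add, hw]
      abel
    · show pic R S n ((z : S.X (n+1)) + σ n w) = w
      rw [map_add, hz, zero_add, hw]
  · ext x
    show (x - σ n (pic R S n x)) + σ n (pic R S n x) = x
    abel

lemma ec_apply (n : ℕ) (x : S.X (n+1)) :
    ((ec R S σ hσ n x).1 : S.X (n+1)) = x - σ n (pic R S n x) ∧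
    (ec R S σ hσ n x).2 = pic R S n x := ⟨rfl, rfl⟩

end Aux

section Aux2

variable (S : ChainComplex (ModuleCat.{0} R) ℕ)

lemma dd' (n : ℕ) (x : S.X (n+2)) : S.d (n+1) n (S.d (n+2) (n+1) x) = 0 :=
  congrArg Subtype.val (pic_d R S n x)

lemma ddisc (F : ℕ → ModuleCat.{0} R) (n : ℕ) (y : discX R F (n+2)) :
    discD R F n (discD R F (n+1) y) = 0 := by
  cases n <;> rfl

/-- The modules of the auxiliary trivial complex `T`. -/
noncomputable def Ac : ℕ → ModuleCat.{0} R
  | 0 => ModuleCat.of R PUnit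
  | (n+1) => ModuleCat.of R (Zc R S n × Ac n)

variable (σ : ∀ n, Zc R S n →ₗ[R] S.X (n+1))
variable (hσ : ∀ n, (pic R S n).comp (σ n) = LinearMap.id)

/-- `Ac (n+2) ≃ S.X (n+1) × Ac n`. -/
noncomputable def acEquiv (n : ℕ) : (Ac R S (n+2) : Type) ≃ₗ[R] (S.X (n+1) × Ac R S n) :=
  ((LinearEquiv.prodAssoc R ↥(Zc R S (n+1)) ↥(Zc R S n) (Ac R S n : Type)).symm.trans
    ((ec R S σ hσ n).symm.prodCongr (LinearEquiv.refl R (Ac R S n : Type))))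

lemma free_fin_ac (σ : ∀ n, Zc R S n →ₗ[R] S.X (n+1))
    (hσ : ∀ n, (pic R S n).comp (σ n) = LinearMap.id)
    (hS : ∀ n, Module.Free R (S.X n) ∧ Module.Finite R (S.X n)) (n : ℕ) :
    (Module.Free R (Ac R S n) ∧ Module.Finite R (Ac R S n)) ∧
    (Module.Free R (Ac R S (n+1)) ∧ Module.Finite R (Ac R S (n+1))) := by
  induction n with
  | zero =>
    have hsub : Subsingleton (Ac R S 0) := inferInstanceAs (Subsingleton PUnit)
    have hfin : Module.Finite R (Ac R S 0) :=
      Module.Finite.of_surjective (0 : R →ₗ[R] (Ac R S 0)) (fun x => ⟨0, Subsingleton.elim _ _⟩)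
    refine ⟨⟨Module.Free.of_subsingleton R _, hfin⟩, ?_⟩
    have e : (S.X 0 × Ac R S 0) ≃ₗ[R] Ac R S 1 :=
      (e0 R S).prodCongr (LinearEquiv.refl R (Ac R S 0))
    have h1 := (hS 0).1
    have h2 := (hS 0).2
    exact ⟨Module.Free.of_equiv e, Module.Finite.equiv e⟩
  | succ n ih =>
    refine ⟨ih.2, ?_⟩
    have h1 := (hS (n+1)).1
    have h2 := (hS (n+1)).2
    have h3 := ih.1.1
    have h4 := ih.1.2
    exact ⟨Module.Free.of_equiv (acEquiv R S σ hσ n).symm,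
      Module.Finite.equiv (acEquiv R S σ hσ n).symm⟩

/-- The product complex `S × T` as a concrete chain complex. -/
noncomputable def Pc : ChainComplex (ModuleCat.{0} R) ℕ :=
  ChainComplex.of (fun n => ModuleCat.of R (S.X n × discX R (Ac R S) n))
    (fun n => ModuleCat.ofHom (LinearMap.prodMap (S.d (n+1) n).hom (discD R (Ac R S) n).hom :
      (S.X (n+1) × discX R (Ac R S) (n+1)) →ₗ[R] (S.X n × discX R (Ac R S) n)))
    (by
      intro n
      apply ModuleCat.hom_ext
      apply LinearMap.ext
      rintro ⟨x, y⟩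
      refine Prod.ext ?_ ?_
      · exact dd' R S n x
      · exact ddisc R (Ac R S) n y)

/-- Componentwise equivalences between `Pc` and the target disc complex. -/
noncomputable def psi :
    ∀ n, ((S.X n × discX R (Ac R S) n) ≃ₗ[R] discX R (fun k => Ac R S (k+1)) n)
  | 0 => (e0 R S).prodCongr (LinearEquiv.refl R (Ac R S 0 : Type))
  | (n+1) =>
    ((ec R S σ hσ n).prodCongr (LinearEquiv.refl R ((Ac R S (n+1) : Type) × (Ac R S n : Type)))).trans
      (LinearEquiv.prodProdProdComm R ↥(Zc R S (n+1)) ↥(Zc R S n)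
        (Ac R S (n+1) : Type) (Ac R S n : Type))

/-- `Pc ≅ discComplex` of `fun k => Ac (k+1)`. -/
noncomputable def beta : Pc R S ≅ discComplex R (fun k => Ac R S (k+1)) := by
  refine HomologicalComplex.Hom.isoOfComponents
    (fun n => (psi R S σ hσ n).toModuleIso) ?_
  intro i j hij
  obtain rfl : i = j + 1 := hij.symm
  show (psi R S σ hσ (j+1)).toModuleIso.hom ≫ (discComplex R (fun k => Ac R S (k+1))).d (j+1) j
    = (Pc R S).d (j+1) j ≫ (psi R S σ hσ j).toModuleIso.hom
  rw [show (discComplex R (fun k => Ac R S (k+1))).d (j+1) j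
      = discD R (fun k => Ac R S (k+1)) j from ChainComplex.of_d _ _ _,
    show (Pc R S).d (j+1) j
      = ModuleCat.ofHom (LinearMap.prodMap (S.d (j+1) j).hom (discD R (Ac R S) j).hom :
        (S.X (j+1) × discX R (Ac R S) (j+1)) →ₗ[R] (S.X j × discX R (Ac R S) j))
      from by simp [Pc]]
  cases j with
  | zero =>
    apply ModuleCat.hom_ext
    apply LinearMap.ext
    rintro ⟨x, a, b⟩
    rfl
  | succ m =>
    apply ModuleCat.hom_ext
    apply LinearMap.ext
    rintro ⟨x, a, b⟩
    have h0 : pic R S m (S.d (m+2) (m+1) x) = 0 := pic_d R S m x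
    refine Prod.ext (Prod.ext ?_ rfl) (Prod.ext ?_ rfl)
    · apply Subtype.ext
      show S.d (m+2) (m+1) x
        = S.d (m+2) (m+1) x - σ m (pic R S m (S.d (m+2) (m+1) x))
      rw [h0, map_zero, sub_zero]
    · show (0 : Zc R S m) = pic R S m (S.d (m+2) (m+1) x)
      rw [h0]

/-- Projection `Pc ⟶ S`. -/
noncomputable def pS : Pc R S ⟶ S where
  f n := ModuleCat.ofHom (LinearMap.fst R (S.X n) (discX R (Ac R S) n) : (S.X n × discX R (Ac R S) n) →ₗ[R] S.X n)
  comm' := by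
    intro i j hij
    obtain rfl : i = j + 1 := hij.symm
    rw [show (Pc R S).d (j+1) j
      = ModuleCat.ofHom (LinearMap.prodMap (S.d (j+1) j).hom (discD R (Ac R S) j).hom :
        (S.X (j+1) × discX R (Ac R S) (j+1)) →ₗ[R] (S.X j × discX R (Ac R S) j))
      from by simp [Pc]]
    rfl

/-- Projection `Pc ⟶ discComplex Ac`. -/
noncomputable def pT : Pc R S ⟶ discComplex R (Ac R S) where
  f n := ModuleCat.ofHom (LinearMap.snd R (S.X n) (discX R (Ac R S) n) :
    (S.X n × discX R (Ac R S) n) →ₗ[R] discX R (Ac R S) n)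
  comm' := by
    intro i j hij
    obtain rfl : i = j + 1 := hij.symm
    rw [show (Pc R S).d (j+1) j
      = ModuleCat.ofHom (LinearMap.prodMap (S.d (j+1) j).hom (discD R (Ac R S) j).hom :
        (S.X (j+1) × discX R (Ac R S) (j+1)) →ₗ[R] (S.X j × discX R (Ac R S) j))
      from by simp [Pc],
      show (discComplex R (Ac R S)).d (j+1) j = discD R (Ac R S) j from ChainComplex.of_d _ _ _]
    rfl

/-- Inclusion `S ⟶ Pc`. -/
noncomputable def iS : S ⟶ Pc R S where
  f n := ModuleCat.ofHom (LinearMap.inl R (S.X n) (discX R (Ac R S) n) : S.X n →ₗ[R] (S.X n × discX R (Ac R S) n))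
  comm' := by
    intro i j hij
    obtain rfl : i = j + 1 := hij.symm
    rw [show (Pc R S).d (j+1) j
      = ModuleCat.ofHom (LinearMap.prodMap (S.d (j+1) j).hom (discD R (Ac R S) j).hom :
        (S.X (j+1) × discX R (Ac R S) (j+1)) →ₗ[R] (S.X j × discX R (Ac R S) j))
      from by simp [Pc]]
    apply ModuleCat.hom_ext
    apply LinearMap.ext
    intro x
    refine Prod.ext rfl ?_
    exact map_zero (discD R (Ac R S) j).hom

/-- Inclusion `discComplex Ac ⟶ Pc`. -/
noncomputable def iT : discComplex R (Ac R S) ⟶ Pc R S where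
  f n := ModuleCat.ofHom (LinearMap.inr R (S.X n) (discX R (Ac R S) n) :
    discX R (Ac R S) n →ₗ[R] (S.X n × discX R (Ac R S) n))
  comm' := by
    intro i j hij
    obtain rfl : i = j + 1 := hij.symm
    rw [show (Pc R S).d (j+1) j
      = ModuleCat.ofHom (LinearMap.prodMap (S.d (j+1) j).hom (discD R (Ac R S) j).hom :
        (S.X (j+1) × discX R (Ac R S) (j+1)) →ₗ[R] (S.X j × discX R (Ac R S) j))
      from by simp [Pc],
      show (discComplex R (Ac R S)).d (j+1) j = discD R (Ac R S) j from ChainComplex.of_d _ _ _]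
    apply ModuleCat.hom_ext
    apply LinearMap.ext
    intro y
    refine Prod.ext ?_ rfl
    exact map_zero (S.d (j+1) j).hom

/-- `S ⊞ discComplex Ac ≅ Pc`. -/
noncomputable def alpha : (S ⊞ discComplex R (Ac R S)) ≅ Pc R S where
  hom := biprod.desc (iS R S) (iT R S)
  inv := biprod.lift (pS R S) (pT R S)
  hom_inv_id := by
    have h1 : iS R S ≫ pS R S = 𝟙 S := by
      apply HomologicalComplex.hom_ext
      intro n
      rfl
    have h2 : iS R S ≫ pT R S = 0 := by
      apply HomologicalComplex.hom_ext
      intro n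
      rfl
    have h3 : iT R S ≫ pS R S = 0 := by
      apply HomologicalComplex.hom_ext
      intro n
      rfl
    have h4 : iT R S ≫ pT R S = 𝟙 _ := by
      apply HomologicalComplex.hom_ext
      intro n
      rfl
    apply biprod.hom_ext'
    · apply biprod.hom_ext <;>
        simp [reassoc_of% h1, reassoc_of% h2, h1, h2]
    · apply biprod.hom_ext <;>
        simp [h3, h4]
  inv_hom_id := by
    rw [biprod.lift_desc]
    apply HomologicalComplex.hom_ext
    intro n
    rw [HomologicalComplex.add_f_apply]
    apply ModuleCat.hom_ext
    apply LinearMap.ext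
    rintro ⟨x, y⟩
    show ((x, 0) : S.X n × discX R (Ac R S) n) + (0, y) = (x, y)
    rw [Prod.mk_add_mk, add_zero, zero_add]


end Aux2

/-- For a bounded-below acyclic chain complex `S` of finitely generated free `R`-modules,
there is a trivial complex `T` such that `S ⊕ T` is trivial. -/
theorem stmt_4 (S : ChainComplex (ModuleCat.{0} R) ℕ)
    (hS : ∀ n, Module.Free R (S.X n) ∧ Module.Finite R (S.X n))
    (hacyclic : ∀ n, S.ExactAt n) :
    ∃ T : ChainComplex (ModuleCat.{0} R) ℕ,
      IsTrivialComplex R T ∧ IsTrivialComplex R (S ⊞ T) := by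
  have hs : ∀ n, ∃ s : Zc R S n →ₗ[R] S.X (n+1), (pic R S n).comp s = LinearMap.id := fun n => by
    have := (proj_fin R S hS hacyclic n).1
    exact Module.projective_lifting_property _ _ (pic_surj R S hacyclic n)
  choose σ hσ using hs
  exact ⟨discComplex R (Ac R S),
    ⟨Ac R S, fun n => (free_fin_ac R S σ hσ hS n).1, ⟨Iso.refl _⟩⟩,
    ⟨fun k => Ac R S (k+1), fun n => (free_fin_ac R S σ hσ hS n).2,
      ⟨(alpha R S) ≪≫ (beta R S σ hσ)⟩⟩⟩
end

section
/- Let Q be a commutative factorial ring and let C_* be a bounded-below complex of finitely generated free Q-modules. If F is a finitely generated free Q-module and T_*(i,F) denotes the complex 0 ← F ←(id)— F ← 0 in degrees i, i+1, then the re-indexed Fitting ideal J_m^{(k)}(C_*) = I_{rk C_k − rk C_{k−1} − m + 1}(∂_{k+1}) is unchanged by replacing C_* with C_* ⊕ T_*(i,F) for i ∈ {k−1, k, k+1}. -/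
open Matrix

variable {Q : Type} [CommRing Q]

/-- The ideal of `Q` generated by all `s × s` minors of a matrix (`= Q` for `s = 0`,
`= 0` when `s` exceeds the matrix dimensions). -/
def minorsIdeal {I J : Type} (s : ℕ) (M : Matrix I J Q) : Ideal Q :=
  Ideal.span {d : Q | ∃ (r : Fin s → I) (c : Fin s → J),
    Function.Injective r ∧ Function.Injective c ∧ d = (M.submatrix r c).det}

/-- The re-indexed Fitting ideal `J_m^{(k)}(C_*) = I_{rk C_k − rk C_{k−1} − m + 1}(∂_{k+1})`
of a chain complex, computed from the matrix `M` of `∂_{k+1}` and the ranks `rk C_k` and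
`rk C_{k−1}` (with the conventions `I_s = Q` for `s ≤ 0`). -/
def fittingJ {I J : Type} (rkCk rkCkm1 : ℕ) (m : ℤ) (M : Matrix I J Q) : Ideal Q :=
  minorsIdeal ((rkCk : ℤ) - (rkCkm1 : ℤ) - m + 1).toNat M

lemma det_mem_minorsIdeal {I J : Type} {s : ℕ} {M : Matrix I J Q}
    {r : Fin s → I} {c : Fin s → J} (hr : Function.Injective r) (hc : Function.Injective c) :
    (M.submatrix r c).det ∈ minorsIdeal s M :=
  Ideal.subset_span ⟨r, c, hr, hc, rfl⟩

lemma minorsIdeal_zero' {I J : Type} (M : Matrix I J Q) : minorsIdeal 0 M = ⊤ := by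
  rw [Ideal.eq_top_iff_one]
  have h := det_mem_minorsIdeal (Q := Q) (M := M)
    (r := Fin.elim0) (c := Fin.elim0) (fun i => i.elim0) (fun i => i.elim0)
  simpa [Matrix.det_fin_zero] using h

lemma minorsIdeal_submatrix_le {I J I' J' : Type} (s : ℕ) (M : Matrix I J Q)
    {f : I' → I} {g : J' → J} (hf : Function.Injective f) (hg : Function.Injective g) :
    minorsIdeal s (M.submatrix f g) ≤ minorsIdeal s M := by
  rw [minorsIdeal, Ideal.span_le]
  rintro d ⟨r, c, hr, hc, rfl⟩
  rw [Matrix.submatrix_submatrix]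
  exact det_mem_minorsIdeal (hf.comp hr) (hg.comp hc)

lemma minorsIdeal_reindex {I J I' J' : Type} (s : ℕ) (M : Matrix I J Q)
    (e : I' ≃ I) (f : J' ≃ J) :
    minorsIdeal s (M.submatrix ⇑e ⇑f) = minorsIdeal s M := by
  refine le_antisymm (minorsIdeal_submatrix_le s M e.injective f.injective) ?_
  have := minorsIdeal_submatrix_le s (M.submatrix ⇑e ⇑f) e.symm.injective f.symm.injective
  simpa [Matrix.submatrix_submatrix] using this

lemma minorsIdeal_transpose {I J : Type} (s : ℕ) (M : Matrix I J Q) :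
    minorsIdeal s Mᵀ = minorsIdeal s M := by
  have key : ∀ {I J : Type} (M : Matrix I J Q), minorsIdeal s Mᵀ ≤ minorsIdeal s M := by
    intro I J M
    rw [minorsIdeal, Ideal.span_le]
    rintro d ⟨r, c, hr, hc, rfl⟩
    have : (Mᵀ.submatrix r c) = (M.submatrix c r)ᵀ := rfl
    rw [this, Matrix.det_transpose]
    exact det_mem_minorsIdeal hc hr
  exact le_antisymm (key M) (by simpa using key Mᵀ)

lemma minorsIdeal_succ_le {I J : Type} (s : ℕ) (M : Matrix I J Q) :
    minorsIdeal (s + 1) M ≤ minorsIdeal s M := by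
  rw [minorsIdeal, Ideal.span_le]
  rintro d ⟨r, c, hr, hc, rfl⟩
  rw [Matrix.det_succ_row_zero]
  refine Ideal.sum_mem _ fun j _ => ?_
  rw [Matrix.submatrix_submatrix]
  exact Ideal.mul_mem_left _ _
    (det_mem_minorsIdeal (hr.comp (Fin.succ_injective s)) (hc.comp Fin.succAbove_right_injective))

lemma extract_left {α I K : Type} {f : α → I ⊕ K} (h : ∀ i, ∃ x, f i = Sum.inl x) :
    ∃ g : α → I, f = Sum.inl ∘ g := by
  choose g hg using h; exact ⟨g, funext hg⟩

lemma inj_of_inl_comp {α I K : Type} {f : α → I ⊕ K} (hf : Function.Injective f) {g : α → I}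
    (h : f = Sum.inl ∘ g) : Function.Injective g := by
  intro i j hij; apply hf; rw [h]; simp [hij]

/-- Adding zero columns does not change the minors ideal. -/
lemma minorsIdeal_zeroCols {I J K : Type} (s : ℕ) (M : Matrix I (J ⊕ K) Q)
    (h0 : ∀ i k, M i (Sum.inr k) = 0) :
    minorsIdeal s M = minorsIdeal s (M.submatrix id Sum.inl) := by
  refine le_antisymm ?_ (minorsIdeal_submatrix_le s M Function.injective_id Sum.inl_injective)
  rw [minorsIdeal, Ideal.span_le]
  rintro d ⟨r, c, hr, hc, rfl⟩
  by_cases hall : ∀ j, ∃ x, c j = Sum.inl x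
  · obtain ⟨g, hg⟩ := extract_left hall
    have : M.submatrix r c = (M.submatrix id Sum.inl).submatrix r g := by
      rw [Matrix.submatrix_submatrix, hg]; rfl
    rw [this]
    exact det_mem_minorsIdeal hr (inj_of_inl_comp hc hg)
  · push_neg at hall
    obtain ⟨j, hj⟩ := hall
    have : (M.submatrix r c).det = 0 := by
      apply Matrix.det_eq_zero_of_column_eq_zero j
      intro i
      rcases hcj : c j with x | k
      · exact absurd hcj (by simpa using hj x)
      · simp [Matrix.submatrix_apply, hcj, h0]
    rw [this]; exact Ideal.zero_mem _

/-- Adding zero rows does not change the minors ideal. -/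
lemma minorsIdeal_zeroRows {I J K : Type} (s : ℕ) (M : Matrix (I ⊕ K) J Q)
    (h0 : ∀ k j, M (Sum.inr k) j = 0) :
    minorsIdeal s M = minorsIdeal s (M.submatrix Sum.inl id) := by
  have h1 : minorsIdeal s Mᵀ = minorsIdeal s (Mᵀ.submatrix id Sum.inl) :=
    minorsIdeal_zeroCols s Mᵀ (fun j k => h0 k j)
  have h2 : Mᵀ.submatrix id Sum.inl = (M.submatrix Sum.inl id)ᵀ := rfl
  rw [← minorsIdeal_transpose s M, h1, h2, minorsIdeal_transpose]

/-- Adding a `1 × 1` identity block raises the minor size by one. -/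
lemma minorsIdeal_idBlock_one {I J : Type} (s : ℕ) (N : Matrix I J Q) :
    minorsIdeal (s + 1) (fromBlocks N 0 0 (1 : Matrix (Fin 1) (Fin 1) Q))
      = minorsIdeal s N := by
  set M' : Matrix (I ⊕ Fin 1) (J ⊕ Fin 1) Q := fromBlocks N 0 0 1 with hM'
  apply le_antisymm
  · rw [minorsIdeal, Ideal.span_le]
    rintro d ⟨ρ, γ, hρ, hγ, rfl⟩
    by_cases h1 : ∀ i, ∃ x, ρ i = Sum.inl x
    · by_cases h2 : ∀ j, ∃ x, γ j = Sum.inl x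
      · obtain ⟨ρ₀, hρ₀⟩ := extract_left h1
        obtain ⟨γ₀, hγ₀⟩ := extract_left h2
        have : M'.submatrix ρ γ = N.submatrix ρ₀ γ₀ := by
          rw [hρ₀, hγ₀]; ext i j; simp [M', Matrix.submatrix_apply]
        rw [this]
        exact minorsIdeal_succ_le s N
          (det_mem_minorsIdeal (inj_of_inl_comp hρ hρ₀) (inj_of_inl_comp hγ hγ₀))
      · push_neg at h2
        obtain ⟨b, hb⟩ := h2
        have hγb : γ b = Sum.inr 0 := by
          rcases h : γ b with x | k
          · exact absurd h (by simpa using hb x)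
          · exact congrArg Sum.inr (Subsingleton.elim _ _)
        have : (M'.submatrix ρ γ).det = 0 := by
          apply Matrix.det_eq_zero_of_column_eq_zero b
          intro i
          obtain ⟨x, hx⟩ := h1 i
          simp [Matrix.submatrix_apply, hx, hγb, M']
        rw [this]; exact Ideal.zero_mem _
    · push_neg at h1
      obtain ⟨a, ha⟩ := h1
      have hρa : ρ a = Sum.inr 0 := by
        rcases h : ρ a with x | k
        · exact absurd h (by simpa using ha x)
        · exact congrArg Sum.inr (Subsingleton.elim _ _)
      by_cases h2 : ∀ j, ∃ x, γ j = Sum.inl x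
      · have : (M'.submatrix ρ γ).det = 0 := by
          apply Matrix.det_eq_zero_of_row_eq_zero a
          intro j
          obtain ⟨x, hx⟩ := h2 j
          simp [Matrix.submatrix_apply, hx, hρa, M']
        rw [this]; exact Ideal.zero_mem _
      · push_neg at h2
        obtain ⟨b, hb⟩ := h2
        have hγb : γ b = Sum.inr 0 := by
          rcases h : γ b with x | k
          · exact absurd h (by simpa using hb x)
          · exact congrArg Sum.inr (Subsingleton.elim _ _)
        rw [Matrix.det_succ_row _ a]
        refine Ideal.sum_mem _ fun j _ => ?_
        rcases hj : γ j with x | k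
        · have : (M'.submatrix ρ γ) a j = 0 := by
            simp [Matrix.submatrix_apply, hρa, hj, M']
          rw [this]; simp
        · have hrowL : ∀ i : Fin s, ∃ x, ρ (a.succAbove i) = Sum.inl x := by
            intro i
            rcases h : ρ (a.succAbove i) with x | k'
            · exact ⟨x, rfl⟩
            · exfalso
              have : ρ (a.succAbove i) = ρ a := by
                rw [h, hρa]; exact congrArg Sum.inr (Subsingleton.elim _ _)
              exact Fin.succAbove_ne a i (hρ this)
          have hcolL : ∀ i : Fin s, ∃ x, γ (j.succAbove i) = Sum.inl x := by
            intro i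
            rcases h : γ (j.succAbove i) with x | k'
            · exact ⟨x, rfl⟩
            · exfalso
              have : γ (j.succAbove i) = γ j := by
                rw [h, hj]; exact congrArg Sum.inr (Subsingleton.elim _ _)
              exact Fin.succAbove_ne j i (hγ this)
          obtain ⟨ρ₀, hρ₀⟩ := extract_left hrowL
          obtain ⟨γ₀, hγ₀⟩ := extract_left hcolL
          have hsub : (M'.submatrix ρ γ).submatrix a.succAbove j.succAbove
              = N.submatrix ρ₀ γ₀ := by
            have hρ₀' : ρ ∘ a.succAbove = Sum.inl ∘ ρ₀ := hρ₀
            have hγ₀' : γ ∘ j.succAbove = Sum.inl ∘ γ₀ := hγ₀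
            rw [Matrix.submatrix_submatrix, hρ₀', hγ₀']
            ext i i'; simp [M', Matrix.submatrix_apply]
          rw [hsub]
          exact Ideal.mul_mem_left _ _
            (det_mem_minorsIdeal
              (inj_of_inl_comp (hρ.comp Fin.succAbove_right_injective) hρ₀)
              (inj_of_inl_comp (hγ.comp Fin.succAbove_right_injective) hγ₀))
  · rw [minorsIdeal, Ideal.span_le]
    rintro d ⟨ρ, γ, hρ, hγ, rfl⟩
    set e : Fin s ⊕ Fin 1 ≃ Fin (s + 1) := finSumFinEquiv
    have key : M'.submatrix (Sum.map ρ id ∘ ⇑e.symm) (Sum.map γ id ∘ ⇑e.symm)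
        = (fromBlocks (N.submatrix ρ γ) 0 0 (1 : Matrix (Fin 1) (Fin 1) Q)).submatrix
            ⇑e.symm ⇑e.symm := by
      ext i j
      rcases h1 : e.symm i with x | x <;> rcases h2 : e.symm j with y | y <;>
        simp [M', Matrix.submatrix_apply, h1, h2]
    have hdet : (N.submatrix ρ γ).det
        = (M'.submatrix (Sum.map ρ id ∘ ⇑e.symm) (Sum.map γ id ∘ ⇑e.symm)).det := by
      rw [key, Matrix.det_submatrix_equiv_self e.symm, Matrix.det_fromBlocks_zero₂₁]
      simp
    rw [hdet]
    exact det_mem_minorsIdeal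
      ((hρ.sumMap Function.injective_id).comp e.symm.injective)
      ((hγ.sumMap Function.injective_id).comp e.symm.injective)

lemma blockKey {I J : Type} (r : ℕ) (N : Matrix I J Q) :
    (fromBlocks N 0 0 (1 : Matrix (Fin (r+1)) (Fin (r+1)) Q)).submatrix
        ⇑((Equiv.sumAssoc I (Fin r) (Fin 1)).trans
          (Equiv.sumCongr (Equiv.refl I) finSumFinEquiv))
        ⇑((Equiv.sumAssoc J (Fin r) (Fin 1)).trans
          (Equiv.sumCongr (Equiv.refl J) finSumFinEquiv))
      = fromBlocks (fromBlocks N 0 0 (1 : Matrix (Fin r) (Fin r) Q)) 0 0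
          (1 : Matrix (Fin 1) (Fin 1) Q) := by
  ext i j
  rcases i with (a | a) | a <;> rcases j with (b | b) | b <;>
    simp [Matrix.submatrix_apply, Matrix.one_apply, Fin.ext_iff] <;> omega

/-- Adding an `r × r` identity block raises the minor size by `r`. -/
lemma minorsIdeal_idBlock {I J : Type} (s r : ℕ) (N : Matrix I J Q) :
    minorsIdeal (s + r) (fromBlocks N 0 0 (1 : Matrix (Fin r) (Fin r) Q))
      = minorsIdeal s N := by
  induction r with
  | zero =>
    rw [Nat.add_zero,
      ← minorsIdeal_reindex s (fromBlocks N 0 0 (1 : Matrix (Fin 0) (Fin 0) Q))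
        (Equiv.sumEmpty I (Fin 0)).symm (Equiv.sumEmpty J (Fin 0)).symm]
    have : (fromBlocks N 0 0 (1 : Matrix (Fin 0) (Fin 0) Q)).submatrix
        ⇑(Equiv.sumEmpty I (Fin 0)).symm ⇑(Equiv.sumEmpty J (Fin 0)).symm = N := by
      ext i j; simp [Matrix.submatrix_apply]
    rw [this]
  | succ r ih =>
    rw [← minorsIdeal_reindex (s + (r+1)) (fromBlocks N 0 0 (1 : Matrix (Fin (r+1)) (Fin (r+1)) Q))
        ((Equiv.sumAssoc I (Fin r) (Fin 1)).trans
          (Equiv.sumCongr (Equiv.refl I) finSumFinEquiv))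
        ((Equiv.sumAssoc J (Fin r) (Fin 1)).trans
          (Equiv.sumCongr (Equiv.refl J) finSumFinEquiv)),
      blockKey, show s + (r + 1) = (s + r) + 1 from rfl, minorsIdeal_idBlock_one, ih]

/-- For a bounded-below chain complex `C_*` of finitely generated free modules over a
factorial commutative ring `Q`, with `∂_{k+1}` given by the matrix `D` (`rk C_k = l`,
`rk C_{k−1} = mk1`, `rk C_{k+1} = p`), the Fitting ideal `J_m^{(k)}` is unchanged when `C_*`
is replaced by `C_* ⊕ T_*(i, F)` for a finitely generated free module `F` of rank `r` and
`i ∈ {k, k+1, k−1}`: this adds to the matrix of `∂_{k+1}` respectively an identity block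
(changing `rk C_k` to `l + r`), `r` zero columns, or `r` zero rows (changing `rk C_k` to
`l + r` and `rk C_{k−1}` to `mk1 + r`). -/
theorem stmt_18 [IsDomain Q] [UniqueFactorizationMonoid Q]
    (mk1 l p r : ℕ) (D : Matrix (Fin l) (Fin p) Q) (m : ℤ) :
    (fittingJ (l + r) mk1 m
        (Matrix.fromBlocks D 0 0 (1 : Matrix (Fin r) (Fin r) Q)) = fittingJ l mk1 m D) ∧
    (fittingJ l mk1 m
        (Matrix.fromBlocks D (0 : Matrix (Fin l) (Fin r) Q)
          (0 : Matrix (Fin 0) (Fin p) Q) (0 : Matrix (Fin 0) (Fin r) Q)) =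
      fittingJ l mk1 m D) ∧
    (fittingJ (l + r) (mk1 + r) m
        (Matrix.fromBlocks D (0 : Matrix (Fin l) (Fin 0) Q)
          (0 : Matrix (Fin r) (Fin p) Q) (0 : Matrix (Fin r) (Fin 0) Q)) =
      fittingJ l mk1 m D) := by
  set z : ℤ := (l : ℤ) - (mk1 : ℤ) - m + 1 with hz
  refine ⟨?_, ?_, ?_⟩
  · -- identity block
    have harg : ((l + r : ℕ) : ℤ) - (mk1 : ℤ) - m + 1 = z + r := by push_cast [hz]; ring
    rw [fittingJ, fittingJ, harg]
    rcases le_or_gt 0 z with hz0 | hz0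
    · rw [Int.toNat_add hz0 (by positivity)]
      exact minorsIdeal_idBlock _ r D
    · -- both sides are ⊤
      have hs : z.toNat = 0 := Int.toNat_of_nonpos hz0.le
      rw [hs, minorsIdeal_zero']
      have hle : (z + r).toNat ≤ r := Int.toNat_le.mpr (by omega)
      rw [Ideal.eq_top_iff_one]
      set s' := (z + r).toNat
      have hf : Function.Injective (Sum.inr ∘ Fin.castLE hle : Fin s' → Fin l ⊕ Fin r) :=
        Sum.inr_injective.comp (Fin.castLE_injective hle)
      have hg : Function.Injective (Sum.inr ∘ Fin.castLE hle : Fin s' → Fin p ⊕ Fin r) :=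
        Sum.inr_injective.comp (Fin.castLE_injective hle)
      have hsub : (Matrix.fromBlocks D 0 0 (1 : Matrix (Fin r) (Fin r) Q)).submatrix
          (Sum.inr ∘ Fin.castLE hle) (Sum.inr ∘ Fin.castLE hle)
          = (1 : Matrix (Fin s') (Fin s') Q) := by
        ext i j
        simp [Matrix.submatrix_apply, Matrix.one_apply, Fin.ext_iff]
      have := det_mem_minorsIdeal (M := Matrix.fromBlocks D 0 0 (1 : Matrix (Fin r) (Fin r) Q))
        hf hg
      rwa [hsub, Matrix.det_one] at this
  · -- zero columns
    rw [fittingJ, fittingJ]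
    set s := ((l : ℤ) - (mk1 : ℤ) - m + 1).toNat
    set M : Matrix (Fin l ⊕ Fin 0) (Fin p ⊕ Fin r) Q :=
      Matrix.fromBlocks D 0 0 0 with hM
    have e : Fin l ≃ Fin l ⊕ Fin 0 := (Equiv.sumEmpty (Fin l) (Fin 0)).symm
    rw [← minorsIdeal_reindex s M (Equiv.sumEmpty (Fin l) (Fin 0)).symm
      (Equiv.refl (Fin p ⊕ Fin r))]
    rw [minorsIdeal_zeroCols s _ (by intro i k; simp [M, Matrix.submatrix_apply])]
    have : ((M.submatrix ⇑(Equiv.sumEmpty (Fin l) (Fin 0)).symm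
        ⇑(Equiv.refl (Fin p ⊕ Fin r))).submatrix id Sum.inl) = D := by
      ext i j; simp [M, Matrix.submatrix_apply]
    rw [this]
  · -- zero rows
    have harg : ((l + r : ℕ) : ℤ) - ((mk1 + r : ℕ) : ℤ) - m + 1 = z := by push_cast [hz]; ring
    rw [fittingJ, fittingJ, harg]
    set s := z.toNat
    set M : Matrix (Fin l ⊕ Fin r) (Fin p ⊕ Fin 0) Q :=
      Matrix.fromBlocks D 0 0 0 with hM
    rw [minorsIdeal_zeroRows s M (by rintro k (j | j) <;> simp [M, Matrix.submatrix_apply])]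
    rw [← minorsIdeal_reindex s (M.submatrix Sum.inl id) (Equiv.refl (Fin l))
      (Equiv.sumEmpty (Fin p) (Fin 0)).symm]
    have : ((M.submatrix Sum.inl id).submatrix ⇑(Equiv.refl (Fin l))
        ⇑(Equiv.sumEmpty (Fin p) (Fin 0)).symm) = D := by
      ext i j; simp [M, Matrix.submatrix_apply]
    rw [this]
end
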